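/- Let $Z$ be an uncountable Polish space, $(Y,\mathcal{Y})$ a measurable space, and $(P_y)_{y\in Y}$ a stochastic kernel from $Y$ to $Z$ such that $P_y$ is atomless for every $y\in Y$. Then there exists a jointly measurable map $(y,z)\mapsto \phi_y(z)\in[0,1]$ such that the pushforward of $P_y$ under $\phi_y$ equals Lebesgue measure on $[0,1]$ for every $y\in Y$. -/

import Mathlib

/-!
A standard Borel space `Z` is Borel isomorphic to `ℝ`, so it suffices to treat the atomless
probability measures `η y` on `ℝ` obtained by transport. The cdf `F` of an atomless measure is
continuous, so every sublevel set `{F ≤ t}` with `0 < t < 1` is a half-line `Iic a` with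
`F a = t`; hence `F` pushes `η y` forward to the uniform distribution. Joint measurability of
`(y, x) ↦ F_y x = η y (Iic x)` is measurability of kernel sections.
-/

open MeasureTheory ProbabilityTheory Set Filter

theorem StieltjesFunction.continuous_of_measure_singleton (f : StieltjesFunction ℝ)
    (hf : ∀ x, f.measure {x} = 0) : Continuous f := by
  refine continuous_iff_continuousAt.2 fun x => continuousAt_iff_continuous_left_right.2
    ⟨?_, f.right_continuous x⟩
  rw [← continuousWithinAt_Iio_iff_Iic, f.mono.continuousWithinAt_Iio_iff_leftLim_eq]
  have := hf x
  rw [f.measure_singleton, ENNReal.ofReal_eq_zero, sub_nonpos] at this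
  exact le_antisymm (f.mono.leftLim_le le_rfl) this

theorem ProbabilityTheory.continuous_cdf (μ : Measure ℝ) [IsProbabilityMeasure μ]
    [NullSingletonClass μ] : Continuous (cdf μ) :=
  (cdf μ).continuous_of_measure_singleton fun x => by rw [measure_cdf]; exact measure_singleton x

theorem Monotone.exists_preimage_Iic_eq_Iic {F : ℝ → ℝ} (hmono : Monotone F)
    (hcont : Continuous F) {t : ℝ} (hne : (F ⁻¹' Iic t).Nonempty)
    (hbdd : BddAbove (F ⁻¹' Iic t)) :
    ∃ a, F a = t ∧ F ⁻¹' Iic t = Iic a := by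
  set S := F ⁻¹' Iic t
  have hS : IsClosed S := isClosed_Iic.preimage hcont
  have hSa : S = Iic (sSup S) := by
    rw [← lowerClosure_eq_Iic_csSup hne hbdd hS,
      ((isLowerSet_Iic t).preimage hmono).lowerClosure]
  refine ⟨sSup S, le_antisymm (hS.csSup_mem hne hbdd) ?_, hSa⟩
  have hgt : Ioi (sSup S) ⊆ F ⁻¹' Ici t := fun x hx => by
    have hxS : x ∉ S := by rw [hSa, mem_Iic, not_le]; exact hx
    exact le_of_lt (not_le.1 (show ¬F x ≤ t from hxS))
  have : sSup S ∈ closure (Ioi (sSup S)) := by rw [closure_Ioi]; exact self_mem_Ici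
  exact (isClosed_Ici.preimage hcont).closure_subset (closure_mono hgt this)

theorem ProbabilityTheory.measure_cdf_preimage_Iic (μ : Measure ℝ) [IsProbabilityMeasure μ]
    (hcont : Continuous (cdf μ)) (t : ℝ) :
    μ (cdf μ ⁻¹' Iic t) = ENNReal.ofReal (min t 1) := by
  rcases le_or_gt 1 t with ht1 | ht1
  · have hS : cdf μ ⁻¹' Iic t = univ := eq_univ_of_forall fun x => (cdf_le_one μ x).trans ht1
    rw [hS, min_eq_right ht1, measure_univ, ENNReal.ofReal_one]
  rw [min_eq_left ht1.le]
  rcases (cdf μ ⁻¹' Iic t).eq_empty_or_nonempty with hS | hS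
  · have ht0 : t ≤ 0 := by
      by_contra! ht0
      obtain ⟨x, hx⟩ := ((tendsto_cdf_atBot μ).eventually_lt_const ht0).exists
      exact hS.subset (show x ∈ cdf μ ⁻¹' Iic t from hx.le)
    rw [hS, measure_empty, ENNReal.ofReal_of_nonpos ht0]
  · obtain ⟨c, hc⟩ := ((tendsto_cdf_atTop μ).eventually_const_lt ht1).exists
    have hbdd : BddAbove (cdf μ ⁻¹' Iic t) := ⟨c, fun x hx =>
      le_of_not_gt fun hcx => (hc.trans_le (monotone_cdf μ hcx.le)).not_ge hx⟩
    obtain ⟨a, rfl, ha⟩ := (monotone_cdf μ).exists_preimage_Iic_eq_Iic hcont hS hbdd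
    rw [ha, ofReal_cdf]

theorem Real.volume_restrict_unitInterval_Iic (t : ℝ) :
    volume.restrict (Icc (0 : ℝ) 1) (Iic t) = ENNReal.ofReal (min t 1) := by
  have h : Iic t ∩ Icc 0 1 = Icc 0 (min t 1) := by
    ext x
    simp only [mem_inter_iff, mem_Iic, mem_Icc, le_min_iff]
    tauto
  rw [Measure.restrict_apply measurableSet_Iic, h, Real.volume_Icc, sub_zero]

theorem ProbabilityTheory.map_cdf_eq_volume_restrict (μ : Measure ℝ) [IsProbabilityMeasure μ]
    [NullSingletonClass μ] : μ.map (cdf μ) = volume.restrict (Icc (0 : ℝ) 1) := by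
  have hmeas := (monotone_cdf μ).measurable
  have := Measure.isProbabilityMeasure_map (μ := μ) hmeas.aemeasurable
  refine Measure.ext_of_Iic _ _ fun t => ?_
  rw [Measure.map_apply hmeas measurableSet_Iic, measure_cdf_preimage_Iic μ (continuous_cdf μ),
    Real.volume_restrict_unitInterval_Iic]

theorem ProbabilityTheory.Kernel.measurable_cdf {Y : Type*} [MeasurableSpace Y] (η : Kernel Y ℝ)
    [IsMarkovKernel η] : Measurable fun p : Y × ℝ => cdf (η p.1) p.2 := by
  simp_rw [cdf_eq_real, measureReal_def]
  refine Measurable.ennreal_toReal ?_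
  have hmeas : MeasurableSet {q : (Y × ℝ) × ℝ | q.2 ≤ q.1.2} :=
    measurableSet_le measurable_snd measurable_fst.snd
  exact (η.comap Prod.fst measurable_fst).measurable_kernel_prodMk_left hmeas

theorem MeasurableEquiv.nullSingletonClass_map {α β : Type*} [MeasurableSpace α]
    [MeasurableSpace β] (e : α ≃ᵐ β) (μ : Measure α) [NullSingletonClass μ] :
    NullSingletonClass (μ.map e) :=
  ⟨fun x => by rw [e.map_apply, ← e.image_symm, image_singleton, measure_singleton]⟩

/-- Let `Z` be an uncountable Polish space, `(Y, 𝒴)` a measurable space and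
`κ` a stochastic (Markov) kernel from `Y` to `Z` such that `κ y` is atomless for every `y`.
Then there is a jointly measurable map `(y, z) ↦ φ y z ∈ [0,1]` such that the pushforward of
`κ y` under `φ y` is Lebesgue measure on `[0,1]`, for every `y`. -/
theorem stmt0 {Y Z : Type*} [MeasurableSpace Y] [MeasurableSpace Z] [TopologicalSpace Z]
    [PolishSpace Z] [BorelSpace Z] [Uncountable Z]
    (κ : Kernel Y Z) [IsMarkovKernel κ] (hκ : ∀ y, NoAtoms (κ y)) :
    ∃ φ : Y → Z → ℝ, Measurable (Function.uncurry φ) ∧ (∀ y z, φ y z ∈ Icc (0 : ℝ) 1) ∧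
      ∀ y, (κ y).map (φ y) = volume.restrict (Icc (0 : ℝ) 1) := by
  let e : Z ≃ᵐ ℝ := PolishSpace.measurableEquivOfNotCountable not_countable not_countable
  let η := κ.map e
  have : IsMarkovKernel η := Kernel.IsMarkovKernel.map κ e.measurable
  refine ⟨fun y z => cdf (η y) (e z),
    η.measurable_cdf.comp (measurable_fst.prodMk (e.measurable.comp measurable_snd)),
    fun y z => ⟨cdf_nonneg _ _, cdf_le_one _ _⟩, fun y => ?_⟩
  have : NullSingletonClass (κ y) := hκ y
  have : NullSingletonClass (η y) := by
    rw [Kernel.map_apply _ e.measurable]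
    exact e.nullSingletonClass_map (κ y)
  have hφ : (κ y).map (fun z => cdf (η y) (e z)) = (η y).map (cdf (η y)) := by
    rw [Kernel.map_apply _ e.measurable,
      Measure.map_map (monotone_cdf _).measurable e.measurable]
    rfl
  rw [hφ]
  exact map_cdf_eq_volume_restrict (η y)
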